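/- arXiv:2407.13870 — 9 statements merged into one kernel-verified Lean document; each statement's English description precedes it below -/
import Mathlib

section
/- Let R be an integral domain of characteristic 0 that is finitely generated as a ℤ-module, M a finitely generated free R-module, and ρ : G → Aut_R(M) a representation of a finite group G. Then ρ ⊗ Frac(R) is irreducible (over the fraction field of R) if and only if every ρ-invariant R-submodule N of M is either 0 or of finite index in M as an abelian group. -/
open TensorProduct

open Polynomial in
private lemma exists_int_eq_mul' {R : Type*} [CommRing R] [IsDomain R] :
    ∀ (n : ℕ) (p : Polynomial ℤ), p.Monic → p.natDegree ≤ n → ∀ {s : R}, s ≠ 0 →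
      Polynomial.aeval s p = 0 → ∃ (k : ℤ) (r : R), k ≠ 0 ∧ (k : R) = s * r := by
  intro n
  induction n with
  | zero =>
      intro p hm hd s hs h0
      rw [Nat.le_zero] at hd
      rw [hm.natDegree_eq_zero.mp hd] at h0
      simp at h0
  | succ n ih =>
      intro p hm hd s hs h0
      by_cases hc : p.coeff 0 = 0
      · have hdeg : 1 ≤ p.natDegree := by
          by_contra h
          push_neg at h
          rw [Nat.lt_one_iff] at h
          rw [hm.natDegree_eq_zero.mp h] at hc
          simp at hc
        have hp : p.divX * X = p := by
          conv_rhs => rw [← divX_mul_X_add p]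
          rw [hc, map_zero, add_zero]
        have h1 : Polynomial.aeval s p.divX * s = 0 := by
          have : Polynomial.aeval s (p.divX * X) = 0 := by rw [hp, h0]
          simpa using this
        have h2 : Polynomial.aeval s p.divX = 0 := by
          rcases mul_eq_zero.mp h1 with h | h
          · exact h
          · exact absurd h hs
        have hmon : p.divX.Monic := by
          unfold Polynomial.Monic
          rw [Polynomial.leadingCoeff, natDegree_divX_eq_natDegree_tsub_one, coeff_divX,
            Nat.sub_add_cancel hdeg]
          exact hm
        exact ih p.divX hmon (by
          rw [natDegree_divX_eq_natDegree_tsub_one]; omega) hs h2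
      · refine ⟨p.coeff 0, -(Polynomial.aeval s p.divX), hc, ?_⟩
        have := congrArg (Polynomial.aeval s) (divX_mul_X_add p)
        rw [map_add, map_mul, h0, aeval_C, aeval_X] at this
        have : Polynomial.aeval s p.divX * s + (algebraMap ℤ R) (p.coeff 0) = 0 := this
        rw [algebraMap_int_eq, eq_intCast] at this
        linear_combination this

private lemma exists_int_eq_mul {R : Type*} [CommRing R] [IsDomain R]
    {s : R} (hs : s ≠ 0) (hint : IsIntegral ℤ s) :
    ∃ (k : ℤ) (r : R), k ≠ 0 ∧ (k : R) = s * r := by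
  obtain ⟨p, hmonic, heval⟩ := hint
  exact exists_int_eq_mul' p.natDegree p hmonic le_rfl hs heval

/-- Lemma 2.2.8: for an integral domain `R` of characteristic `0` which is finitely generated
as a `ℤ`-module and a representation `ρ` of a finite group `G` on a finitely generated free
`R`-module `M`, the representation `ρ ⊗ Frac(R)` is irreducible if and only if every
`ρ`-invariant `R`-submodule of `M` is either `0` or of finite index in `M`. -/
theorem stmt3 (R : Type*) [CommRing R] [IsDomain R] [CharZero R] [Module.Finite ℤ R]
    (M : Type*) [AddCommGroup M] [Module R M] [Module.Finite R M] [Module.Free R M]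
    (G : Type*) [Group G] [Finite G] (ρ : G →* (M ≃ₗ[R] M)) :
    (∀ W : Submodule (FractionRing R) (FractionRing R ⊗[R] M),
        (∀ g : G, W.map (LinearMap.baseChange (FractionRing R) (ρ g : M →ₗ[R] M)) ≤ W) →
          W = ⊥ ∨ W = ⊤)
      ↔ (∀ N : Submodule R M, (∀ g : G, N.map (ρ g : M →ₗ[R] M) ≤ N) →
          N = ⊥ ∨ Finite (M ⧸ N)) := by
  set K := FractionRing R with hK
  set f : M →ₗ[R] K ⊗[R] M := TensorProduct.mk R K M 1 with hf
  haveI hloc : IsLocalizedModule (nonZeroDivisors R) f :=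
    (isLocalizedModule_iff_isBaseChange (nonZeroDivisors R) K f).mpr
      (TensorProduct.isBaseChange R M K)
  have halgInj : Function.Injective (algebraMap R K) := IsFractionRing.injective R K
  haveI : CharZero K := charZero_of_injective_algebraMap halgInj
  have hinj : Function.Injective f := by
    intro a b hab
    have h0 : f (a - b) = 0 := by rw [map_sub, hab, sub_self]
    obtain ⟨s, hs⟩ := (IsLocalizedModule.eq_zero_iff (nonZeroDivisors R) f).mp h0
    have : (s : R) ≠ 0 := nonZeroDivisors.coe_ne_zero s
    have := (smul_eq_zero.mp hs).resolve_left this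
    exact sub_eq_zero.mp this
  -- `f m = 1 ⊗ m` and the compatibility with base change
  have hbc : ∀ (g : G) (m : M),
      LinearMap.baseChange K (ρ g : M →ₗ[R] M) (f m) = f ((ρ g : M →ₗ[R] M) m) := by
    intro g m
    simp [hf, TensorProduct.mk_apply]
  have hZM : Module.Finite ℤ M := Module.Finite.trans R M
  constructor
  · -- irreducible → invariant submodules are ⊥ or finite index
    intro hirr N hNinv
    by_cases hN : N = ⊥
    · exact Or.inl hN
    right
    set W : Submodule K (K ⊗[R] M) := Submodule.span K (f '' (N : Set M)) with hW
    have hWinv : ∀ g : G, W.map (LinearMap.baseChange K (ρ g : M →ₗ[R] M)) ≤ W := by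
      intro g
      rw [hW, Submodule.map_span, Submodule.span_le]
      rintro _ ⟨_, ⟨n, hn, rfl⟩, rfl⟩
      rw [hbc]
      exact Submodule.subset_span ⟨(ρ g) n, hNinv g ⟨n, hn, rfl⟩, rfl⟩
    have hWtop : W = ⊤ := by
      rcases hirr W hWinv with h | h
      · exfalso
        obtain ⟨n, hn, hn0⟩ := Submodule.ne_bot_iff N |>.mp hN
        have hfn : f n ∈ W := Submodule.subset_span ⟨n, hn, rfl⟩
        rw [h, Submodule.mem_bot] at hfn
        exact hn0 (hinj (by rw [hfn, map_zero]))
      · exact h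
    -- every element of W has a denominator
    have hden : ∀ x : K ⊗[R] M, x ∈ W →
        ∃ (s : nonZeroDivisors R) (n : M), n ∈ N ∧ (s : R) • x = f n := by
      intro x hx
      rw [hW] at hx
      induction hx using Submodule.span_induction with
      | mem x hxm =>
          obtain ⟨n, hn, rfl⟩ := hxm
          exact ⟨1, n, hn, one_smul _ _⟩
      | zero => exact ⟨1, 0, Submodule.zero_mem N, by simp⟩
      | add x y hx hy ihx ihy =>
          obtain ⟨s, n, hn, hsn⟩ := ihx
          obtain ⟨t, p, hp, htp⟩ := ihy
          refine ⟨s * t, (t : R) • n + (s : R) • p,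
            Submodule.add_mem N (Submodule.smul_mem N _ hn) (Submodule.smul_mem N _ hp), ?_⟩
          rw [map_add, map_smul, map_smul, ← hsn, ← htp]
          push_cast
          rw [smul_add, smul_smul, smul_smul, mul_comm (t : R) (s : R)]
      | smul c x hx ihx =>
          obtain ⟨s, n, hn, hsn⟩ := ihx
          obtain ⟨⟨a, u⟩, hau⟩ := IsLocalization.surj (nonZeroDivisors R) c
          refine ⟨u * s, a • n, Submodule.smul_mem N _ hn, ?_⟩
          rw [map_smul, ← hsn]
          push_cast
          rw [← algebraMap_smul K ((u : R) * (s : R)) (c • x), ← algebraMap_smul K a,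
            ← algebraMap_smul K (s : R) x]
          rw [smul_smul, smul_smul]
          congr 1
          rw [map_mul]
          linear_combination (algebraMap R K (s : R)) * hau
    -- torsion: every element of M has an integer multiple in N
    have key : ∀ m : M, ∃ k : ℤ, k ≠ 0 ∧ k • m ∈ N := by
      intro m
      have hfm : f m ∈ W := by rw [hWtop]; trivial
      obtain ⟨s, n, hn, hsn⟩ := hden (f m) hfm
      have hsm : (s : R) • m ∈ N := by
        have : f ((s : R) • m) = f n := by rw [map_smul, hsn]
        rw [hinj this]; exact hn
      obtain ⟨k, r, hk, hkr⟩ := exists_int_eq_mul (nonZeroDivisors.coe_ne_zero s)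
        (IsIntegral.of_finite ℤ (s : R))
      refine ⟨k, hk, ?_⟩
      have : k • m = r • ((s : R) • m) := by
        rw [← Int.cast_smul_eq_zsmul R, hkr, mul_comm, mul_smul]
      rw [this]
      exact Submodule.smul_mem N r hsm
    haveI : Module.Finite ℤ (M ⧸ N) :=
      Module.Finite.of_surjective ((N.mkQ).restrictScalars ℤ) (Submodule.mkQ_surjective N)
    apply Module.finite_of_fg_torsion
    intro x
    obtain ⟨m, rfl⟩ := Submodule.mkQ_surjective N x
    obtain ⟨k, hk, hkm⟩ := key m
    refine ⟨⟨k, mem_nonZeroDivisors_of_ne_zero hk⟩, ?_⟩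
    show k • N.mkQ m = 0
    rw [← map_zsmul, Submodule.mkQ_apply, Submodule.Quotient.mk_eq_zero]
    exact hkm
  · -- invariant submodules ⊥ or finite index → irreducible
    intro hN W hWinv
    by_cases hWbot : W = ⊥
    · exact Or.inl hWbot
    right
    set N : Submodule R M := (W.restrictScalars R).comap f with hNdef
    have hmemN : ∀ m : M, m ∈ N ↔ f m ∈ W := by
      intro m
      rw [hNdef, Submodule.mem_comap, Submodule.restrictScalars_mem]
    have hNinv : ∀ g : G, N.map (ρ g : M →ₗ[R] M) ≤ N := by
      rintro g _ ⟨m, hm, rfl⟩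
      rw [hmemN, ← hbc]
      exact hWinv g ⟨f m, (hmemN m).mp hm, rfl⟩
    have hNne : N ≠ ⊥ := by
      obtain ⟨x, hx, hx0⟩ := Submodule.ne_bot_iff W |>.mp hWbot
      obtain ⟨⟨n, s⟩, hsn'⟩ := IsLocalizedModule.surj (nonZeroDivisors R) f x
      have hsn : (s : R) • x = f n := hsn'
      refine Submodule.ne_bot_iff N |>.mpr ⟨n, ?_, ?_⟩
      · rw [hmemN, ← hsn]
        exact Submodule.smul_mem (W.restrictScalars R) ((s : R)) hx
      · rintro rfl
        rw [map_zero] at hsn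
        rw [← algebraMap_smul K ((s : R)) x] at hsn
        rcases smul_eq_zero.mp hsn with h | h
        · exact (map_ne_zero_iff _ halgInj).mpr (nonZeroDivisors.coe_ne_zero s) h
        · exact hx0 h
    have hfin : Finite (M ⧸ N) := (hN N hNinv).resolve_left hNne
    rw [eq_top_iff]
    rintro x -
    obtain ⟨⟨m, s⟩, hsm'⟩ := IsLocalizedModule.surj (nonZeroDivisors R) f x
    have hsm : (s : R) • x = f m := hsm'
    have hk0 : (Nat.card (M ⧸ N)) ≠ 0 := Nat.card_pos.ne'
    have hkm : (Nat.card (M ⧸ N)) • m ∈ N := by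
      rw [← Submodule.Quotient.mk_eq_zero, ← Submodule.mkQ_apply, map_nsmul,
        Submodule.mkQ_apply]
      exact card_nsmul_eq_zero'
    have hfm : f m ∈ W := by
      have h1 : f ((Nat.card (M ⧸ N)) • m) ∈ W := (hmemN _).mp hkm
      rw [map_nsmul, ← Nat.cast_smul_eq_nsmul K] at h1
      have hkK : ((Nat.card (M ⧸ N) : K)) ≠ 0 := Nat.cast_ne_zero.mpr hk0
      have := Submodule.smul_mem W ((Nat.card (M ⧸ N) : K))⁻¹ h1
      rwa [inv_smul_smul₀ hkK] at this
    have hsx : algebraMap R K ((s : R)) • x ∈ W := by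
      rw [algebraMap_smul, hsm]
      exact hfm
    have := Submodule.smul_mem W (algebraMap R K ((s : R)))⁻¹ hsx
    rwa [inv_smul_smul₀ ((map_ne_zero_iff _ halgInj).mpr (nonZeroDivisors.coe_ne_zero s))]
      at this
end

section
/- Every finitely generated virtually abelian group H embeds into a semidirect product M ⋊_ρ G, where G is a finite group and M a finitely generated torsion-free abelian group, such that H ∩ M = |G|·M and H surjects onto G. -/
/-- The data of an embedding of a group `H` into a semidirect product `M ⋊[ρ] G` with `G`
finite and `M` finitely generated torsion-free abelian (written multiplicatively), such that
`H ∩ M = |G|·M` and `H` surjects onto `G`. -/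
structure VirtAbelianEmbedding (H : Type*) [Group H] where
  G : Type
  [grp : Group G]
  [fin : Fintype G]
  M : Type
  [mgrp : CommGroup M]
  fg : Group.FG M
  torsionFree : ∀ (x : M) (n : ℕ), n ≠ 0 → x ^ n = 1 → x = 1
  ρ : G →* MulAut M
  φ : H →* M ⋊[ρ] G
  inj : Function.Injective φ
  inter : ∀ x : M, SemidirectProduct.inl x ∈ φ.range ↔ ∃ y : M, y ^ Fintype.card G = x
  surj : Function.Surjective (SemidirectProduct.rightHom.comp φ)

/-!
Let `M ⊴ H` be abelian, torsion-free and of finite index, and `G = H ⧸ M`. Choosing coset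
representatives `q.out`, the elements `t(h, q) = h · q.out · (h q).out⁻¹` lie in `M` and satisfy
`t(ab, q) = a·t(b, q)·a⁻¹ · t(a, b q)`, so `T h = ∏_q t(h, q)` is a crossed homomorphism
`H → M` with `T x = x ^ |G|` for `x ∈ M`; it trivialises `|G|` times the extension class.
Hence `h ↦ (T h, h M)` is a homomorphism `H → M ⋊ G`, injective because `M` is torsion-free,
meeting `M` in `M ^ |G|` and surjecting onto `G`.

Such an `M` exists in every finitely generated virtually abelian group: take the `m`-th powers
of the normal core of an abelian subgroup of finite index, where `m` kills its torsion.
-/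

namespace CommGroup

variable {N : Type*} [CommGroup N]

theorem exists_pow_eq_one_of_isOfFinOrder [Group.FG N] :
    ∃ m ≠ 0, ∀ y : N, IsOfFinOrder y → y ^ m = 1 := by
  obtain ⟨ι, j, _, _, p, hp, e, ⟨f⟩⟩ := equiv_free_prod_prod_multiplicative_zmod N
  have (i : ι) : NeZero (p i ^ e i) := ⟨pow_ne_zero _ (hp i).ne_zero⟩
  refine ⟨Nat.card (∀ i, Multiplicative (ZMod (p i ^ e i))), Nat.card_pos.ne', fun y hy ↦ ?_⟩
  have hfree : (f y).1 = 1 :=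
    ((MonoidHom.fst _ _).isOfFinOrder (f.toMonoidHom.isOfFinOrder hy)).eq_one'
  apply f.injective
  rw [map_pow, map_one]
  ext : 1
  · rw [Prod.pow_fst, hfree, one_pow, Prod.fst_one]
  · exact pow_card_eq_one'

instance characteristic_range_powMonoidHom (m : ℕ) :
    (powMonoidHom m : N →* N).range.Characteristic := by
  refine Subgroup.characteristic_iff_map_le.mpr fun ϕ ↦ ?_
  rintro - ⟨-, ⟨y, rfl⟩, rfl⟩
  exact ⟨ϕ y, by simp⟩

theorem finiteIndex_range_powMonoidHom [Group.FG N] {m : ℕ} (hm : m ≠ 0) :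
    (powMonoidHom m : N →* N).range.FiniteIndex :=
  have := finite_of_fg_isMulTorsion _ (isMulTorsion_quotient_range_powMonoidHom N hm)
  Subgroup.finiteIndex_of_finite_quotient

theorem isMulTorsionFree_range_powMonoidHom {m : ℕ} (hm : ∀ y : N, IsOfFinOrder y → y ^ m = 1) :
    IsMulTorsionFree (powMonoidHom m : N →* N).range := by
  refine .of_not_isOfFinOrder ?_
  rintro ⟨-, y, rfl⟩ hy hfin
  refine hy (Subtype.ext ?_)
  obtain hy | rfl := isOfFinOrder_pow.mp (Submonoid.isOfFinOrder_coe.mpr hfin)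
  · exact hm y hy
  · exact pow_zero y

end CommGroup

open scoped IsMulCommutative

namespace Subgroup

variable {H : Type*} [Group H]

theorem exists_normal_finiteIndex_isMulTorsionFree [Group.FG H] (A : Subgroup H)
    [A.FiniteIndex] [IsMulCommutative A] :
    ∃ M : Subgroup H, M.Normal ∧ M.FiniteIndex ∧ IsMulCommutative M ∧ IsMulTorsionFree M := by
  let N := A.normalCore
  have : IsMulCommutative N := .of_setLike_mul_comm fun a ha b hb ↦
    setLike_mul_comm (A.normalCore_le ha) (A.normalCore_le hb)
  obtain ⟨m, hm0, hm⟩ := CommGroup.exists_pow_eq_one_of_isOfFinOrder (N := N)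
  let K := (powMonoidHom m : N →* N).range
  have : K.FiniteIndex := CommGroup.finiteIndex_range_powMonoidHom hm0
  have : IsMulTorsionFree K := CommGroup.isMulTorsionFree_range_powMonoidHom hm
  refine ⟨K.map N.subtype, inferInstance, ⟨?_⟩, inferInstance, ?_⟩
  · rw [index_map_subtype]
    exact mul_ne_zero FiniteIndex.index_ne_zero FiniteIndex.index_ne_zero
  · let e := K.equivMapOfInjective N.subtype N.subtype_injective
    exact Function.Injective.isMulTorsionFree e.symm.toMonoidHom e.symm.injective

end Subgroup

namespace SemidirectProduct

variable {N G H : Type*} [Group N] [Group G] [Group H] {φ : G →* MulAut N}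

def ofCrossedHom (π : H →* G) (T : H → N) (hT : ∀ a b, T (a * b) = T a * φ (π a) (T b)) :
    H →* N ⋊[φ] G where
  toFun h := ⟨T h, π h⟩
  map_one' := by
    ext
    · simpa using hT 1 1
    · exact map_one π
  map_mul' a b := SemidirectProduct.ext (hT a b) (map_mul π a b)

end SemidirectProduct

namespace Subgroup

variable {H : Type*} [Group H] (M : Subgroup H) [M.Normal]

noncomputable def mulOutDiff (h : H) (q : H ⧸ M) : M :=
  ⟨h * q.out * ((h : H ⧸ M) * q).out⁻¹, by
    rw [← QuotientGroup.eq_one_iff, QuotientGroup.mk_mul, QuotientGroup.mk_mul,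
      QuotientGroup.mk_inv, QuotientGroup.out_eq', QuotientGroup.out_eq', mul_inv_cancel]⟩

theorem mulOutDiff_of_mem {x : H} (hx : x ∈ M) (q : H ⧸ M) : M.mulOutDiff x q = ⟨x, hx⟩ := by
  apply Subtype.ext
  simp [mulOutDiff, (QuotientGroup.eq_one_iff x).mpr hx]

variable [IsMulCommutative M]

noncomputable def quotientConjAct : H ⧸ M →* MulAut M :=
  QuotientGroup.lift M MulAut.conjNormal fun x hx ↦ MulEquiv.ext fun y ↦ Subtype.ext <| by
    rw [MulAut.conjNormal_apply, setLike_mul_comm hx y.2, mul_inv_cancel_right]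
    rfl

theorem coe_quotientConjAct_mk (h : H) (x : M) :
    (M.quotientConjAct h x : H) = h * x * h⁻¹ :=
  MulAut.conjNormal_apply h x

theorem mulOutDiff_mul (a b : H) (q : H ⧸ M) :
    M.mulOutDiff (a * b) q = M.quotientConjAct a (M.mulOutDiff b q) * M.mulOutDiff a (b * q) := by
  apply Subtype.ext
  simp only [mulOutDiff, Subgroup.coe_mul, coe_quotientConjAct_mk, QuotientGroup.mk_mul, mul_assoc]
  group

variable [Fintype (H ⧸ M)]

noncomputable def prodMulOutDiff (h : H) : M := ∏ q, M.mulOutDiff h q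

theorem prodMulOutDiff_mul (a b : H) :
    M.prodMulOutDiff (a * b) = M.prodMulOutDiff a * M.quotientConjAct a (M.prodMulOutDiff b) := by
  simp only [prodMulOutDiff, mulOutDiff_mul, Finset.prod_mul_distrib, map_prod]
  rw [mul_comm, Fintype.prod_equiv (Equiv.mulLeft (b : H ⧸ M)) (fun q ↦ M.mulOutDiff a (b * q))
    (M.mulOutDiff a) fun q ↦ rfl]

theorem prodMulOutDiff_of_mem {x : H} (hx : x ∈ M) :
    M.prodMulOutDiff x = ⟨x, hx⟩ ^ Fintype.card (H ⧸ M) := by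
  simp [prodMulOutDiff, mulOutDiff_of_mem M hx]

open SemidirectProduct

noncomputable def toSemidirectProduct : H →* M ⋊[M.quotientConjAct] (H ⧸ M) :=
  ofCrossedHom (QuotientGroup.mk' M) M.prodMulOutDiff M.prodMulOutDiff_mul

theorem rightHom_comp_toSemidirectProduct :
    rightHom.comp M.toSemidirectProduct = QuotientGroup.mk' M :=
  rfl

theorem toSemidirectProduct_of_mem {x : H} (hx : x ∈ M) :
    M.toSemidirectProduct x = inl (⟨x, hx⟩ ^ Fintype.card (H ⧸ M)) :=
  SemidirectProduct.ext (M.prodMulOutDiff_of_mem hx) ((QuotientGroup.eq_one_iff x).mpr hx)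

theorem mem_of_toSemidirectProduct_eq_inl {h : H} {x : M} (hx : M.toSemidirectProduct h = inl x) :
    h ∈ M :=
  (QuotientGroup.eq_one_iff h).mp (congrArg right hx)

theorem toSemidirectProduct_injective [IsMulTorsionFree M] :
    Function.Injective M.toSemidirectProduct := by
  refine (injective_iff_map_eq_one _).mpr fun h hh ↦ ?_
  have hM : h ∈ M := M.mem_of_toSemidirectProduct_eq_inl (hh.trans (map_one inl).symm)
  rw [M.toSemidirectProduct_of_mem hM, ← map_one inl, inl_inj,
    pow_eq_one_iff_left Fintype.card_ne_zero] at hh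
  exact congrArg Subtype.val hh

theorem inl_mem_range_toSemidirectProduct_iff (x : M) :
    inl x ∈ M.toSemidirectProduct.range ↔ ∃ y : M, y ^ Fintype.card (H ⧸ M) = x := by
  constructor
  · rintro ⟨h, hh⟩
    have hM := M.mem_of_toSemidirectProduct_eq_inl hh
    exact ⟨⟨h, hM⟩, inl_injective ((M.toSemidirectProduct_of_mem hM).symm.trans hh)⟩
  · rintro ⟨y, rfl⟩
    exact ⟨y, M.toSemidirectProduct_of_mem y.2⟩

end Subgroup

/-- Proposition 3.2: every finitely generated virtually abelian group `H` embeds into a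
semidirect product `M ⋊_ρ G` with `G` finite and `M` finitely generated torsion-free abelian,
extending `|G|·M` by `G`. -/
theorem stmt10 (H : Type) [Group H] (hfg : Group.FG H)
    (hva : ∃ A : Subgroup H, A.FiniteIndex ∧ ∀ a ∈ A, ∀ b ∈ A, a * b = b * a) :
    Nonempty (VirtAbelianEmbedding H) := by
  obtain ⟨A, hA, hAcomm⟩ := hva
  have : IsMulCommutative A := .of_setLike_mul_comm hAcomm
  obtain ⟨M, _, _, _, _⟩ := A.exists_normal_finiteIndex_isMulTorsionFree
  let : Fintype (H ⧸ M) := .ofFinite _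
  exact ⟨{
    G := H ⧸ M
    M := M
    fg := inferInstance
    torsionFree := fun _ _ hn ↦ (pow_eq_one_iff_left hn).mp
    ρ := M.quotientConjAct
    φ := M.toSemidirectProduct
    inj := M.toSemidirectProduct_injective
    inter := M.inl_mem_range_toSemidirectProduct_iff
    surj := by
      rw [M.rightHom_comp_toSemidirectProduct]
      exact QuotientGroup.mk'_surjective M }⟩
end

section
/- Let ρ : G → Aut(M) be a representation of a finite group G on a free ℤ-module M, let H ≤ M ⋊_ρ G be a subgroup with H ∩ M = |G|·M and projecting onto G, and for each h ∈ G fix v_h ∈ M with (v_h, h) ∈ H. Then (v₁, g) and (v₂, g) are conjugate in H if and only if there exists h ∈ C(g) (the centralizer of g in G) such that v₁ − ρ(h)v₂ − (v_h − ρ(g)v_h) ∈ |G|·W_g(M), where W_g(M) = Im(id_M − ρ(g)). -/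
/-- The multiplicative group structure on `AddAut M` (composition), as in the older Mathlib,
where `AddAut M` was a `Group`; current Mathlib makes it an `AddGroup` instead. -/
instance addAutMulGroupOld (M : Type*) [Add M] : Group (AddAut M) where
  mul g h := AddEquiv.trans h g
  one := AddEquiv.refl _
  inv := AddEquiv.symm
  mul_assoc _ _ _ := rfl
  one_mul _ := rfl
  mul_one _ := rfl
  inv_mul_cancel := AddEquiv.self_trans_symm

/-- An additive automorphism of `M` seen as a multiplicative automorphism of
`Multiplicative M`, as a monoid homomorphism. -/
def addAutToMulAut (M : Type*) [AddCommGroup M] : AddAut M →* MulAut (Multiplicative M) where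
  toFun f := AddEquiv.toMultiplicative f
  map_one' := rfl
  map_mul' _ _ := rfl

/-!
Conjugating `(v, g)` by `(u, h)` in `M ⋊_ρ G` gives `(u + ρ(h)v − ρ(hgh⁻¹)u, hgh⁻¹)`, so `(v₂, g)` is
conjugate to `(v₁, g)` in `H` iff `v₁ = u + ρ(h)v₂ − ρ(g)u` for some `h ∈ C(g)` and `(u, h) ∈ H`.
As `(v_h, h) ∈ H` and `H ∩ M = |G|·M`, the elements of `H` over `h` are the `(v_h + |G|w, h)`;
substituting this `u` turns the equation into `v₁ − ρ(h)v₂ − (v_h − ρ(g)v_h) = |G|(w − ρ(g)w)`.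
-/

open SemidirectProduct Multiplicative

lemma addAutMulGroupOld_mul_apply {M : Type*} [Add M] (f f' : AddAut M) (x : M) :
    (f * f') x = f (f' x) := rfl

@[simp]
lemma addAutToMulAut_apply {M : Type*} [AddCommGroup M] (f : AddAut M) (x : Multiplicative M) :
    addAutToMulAut M f x = ofAdd (f x.toAdd) := rfl

namespace SemidirectProduct

variable {G M : Type*} [Group G] [AddCommGroup M] {ρ : G →* AddAut M}

lemma inl_ofAdd_mul_inr_inj {a b : M} {g k : G} :
    (inl (ofAdd a) * inr g : Multiplicative M ⋊[(addAutToMulAut M).comp ρ] G) =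
      inl (ofAdd b) * inr k ↔ a = b ∧ g = k := by
  rw [SemidirectProduct.ext_iff]
  simp

lemma conj_inl_ofAdd_mul_inr (u v : M) (h g : G) :
    (inl (ofAdd u) * inr h : Multiplicative M ⋊[(addAutToMulAut M).comp ρ] G) *
        (inl (ofAdd v) * inr g) * (inl (ofAdd u) * inr h)⁻¹ =
      inl (ofAdd (u + ρ h v - ρ (h * g * h⁻¹) u)) * inr (h * g * h⁻¹) := by
  ext
  · simp [sub_eq_add_neg, ← map_inv, addAutMulGroupOld_mul_apply]
  · simp only [mul_right, inv_right, right_inl, right_inr, one_mul]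

lemma inl_ofAdd_mul_inr_mem_iff
    {H : Subgroup (Multiplicative M ⋊[(addAutToMulAut M).comp ρ] G)} {a : M} {h : G}
    (ha : inl (ofAdd a) * inr h ∈ H) (u : M) :
    inl (ofAdd u) * inr h ∈ H ↔ inl (ofAdd (u - a)) ∈ H := by
  have hsplit : (inl (ofAdd u) * inr h : Multiplicative M ⋊[(addAutToMulAut M).comp ρ] G) =
      inl (ofAdd (u - a)) * (inl (ofAdd a) * inr h) := by
    rw [← mul_assoc, ← map_mul, ← ofAdd_add, sub_add_cancel]
  rw [hsplit, H.mul_mem_cancel_right ha]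

lemma exists_conj_inl_ofAdd_mul_inr_iff
    (H : Subgroup (Multiplicative M ⋊[(addAutToMulAut M).comp ρ] G)) (v₁ v₂ : M) (g : G) :
    (∃ x ∈ H, x * (inl (ofAdd v₂) * inr g) * x⁻¹ = inl (ofAdd v₁) * inr g) ↔
      ∃ h : G, h * g = g * h ∧ ∃ u : M, inl (ofAdd u) * inr h ∈ H ∧ u + ρ h v₂ - ρ g u = v₁ := by
  constructor
  · rintro ⟨x, hx, hconj⟩
    rw [← inl_left_mul_inr_right x, ← ofAdd_toAdd x.left, conj_inl_ofAdd_mul_inr,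
      inl_ofAdd_mul_inr_inj] at hconj
    obtain ⟨hv, hg⟩ := hconj
    refine ⟨x.right, mul_inv_eq_iff_eq_mul.mp hg, x.left.toAdd, ?_, ?_⟩
    · simpa using hx
    · rwa [hg] at hv
  · rintro ⟨h, hcomm, u, hu, hv⟩
    have hg : h * g * h⁻¹ = g := mul_inv_eq_iff_eq_mul.mpr hcomm
    exact ⟨_, hu, by rw [conj_inl_ofAdd_mul_inr, hg, hv]⟩

end SemidirectProduct

theorem stmt11_general (G : Type*) [Group G] [Fintype G]
    (M : Type*) [AddCommGroup M]
    (ρ : G →* AddAut M)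
    (H : Subgroup (SemidirectProduct (Multiplicative M) G ((addAutToMulAut M).comp ρ)))
    (hinter : ∀ x : M, SemidirectProduct.inl (Multiplicative.ofAdd x) ∈ H ↔
      ∃ y : M, (Fintype.card G) • y = x)
    (vh : G → M)
    (hvh : ∀ h : G,
      SemidirectProduct.inl (Multiplicative.ofAdd (vh h)) * SemidirectProduct.inr h ∈ H)
    (g : G) (v₁ v₂ : M) :
    (∃ x ∈ H, x * (SemidirectProduct.inl (Multiplicative.ofAdd v₂) *
        SemidirectProduct.inr g) * x⁻¹ =
      SemidirectProduct.inl (Multiplicative.ofAdd v₁) * SemidirectProduct.inr g)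
    ↔ ∃ h : G, h * g = g * h ∧ ∃ w : M,
        v₁ - ρ h v₂ - (vh h - ρ g (vh h)) = (Fintype.card G) • (w - ρ g w) := by
  rw [exists_conj_inl_ofAdd_mul_inr_iff]
  refine exists_congr fun h => and_congr_right fun _ => ?_
  simp only [inl_ofAdd_mul_inr_mem_iff (hvh h), hinter]
  constructor
  · rintro ⟨u, ⟨w, hw⟩, rfl⟩
    refine ⟨w, ?_⟩
    rw [smul_sub, hw, ← map_nsmul, hw, map_sub]
    abel
  · rintro ⟨w, hw⟩
    refine ⟨Fintype.card G • w + vh h, ⟨w, by abel⟩, ?_⟩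
    rw [map_add, map_nsmul]
    rw [smul_sub] at hw
    linear_combination (norm := abel) -hw

/-- Lemma 3.4: with `H ≤ M ⋊_ρ G` an extension of `|G|·M` by `G` and chosen elements
`(v_h, h) ∈ H`, the elements `(v₁, g)` and `(v₂, g)` of `H` are conjugate in `H` if and only
if there is `h ∈ C(g)` with `v₁ − ρ(h)v₂ − (v_h − ρ(g)v_h) ∈ |G|·W_g(M)`, where
`W_g(M) = Im(id − ρ(g))`. -/
theorem stmt11 (G : Type*) [Group G] [Fintype G]
    (M : Type*) [AddCommGroup M] [Module.Free ℤ M]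
    (ρ : G →* AddAut M)
    (H : Subgroup (SemidirectProduct (Multiplicative M) G ((addAutToMulAut M).comp ρ)))
    (hinter : ∀ x : M, SemidirectProduct.inl (Multiplicative.ofAdd x) ∈ H ↔
      ∃ y : M, (Fintype.card G) • y = x)
    (hsurj : ∀ g : G, ∃ x ∈ H, SemidirectProduct.rightHom x = g)
    (vh : G → M)
    (hvh : ∀ h : G,
      SemidirectProduct.inl (Multiplicative.ofAdd (vh h)) * SemidirectProduct.inr h ∈ H)
    (g : G) (v₁ v₂ : M)
    (h₁ : SemidirectProduct.inl (Multiplicative.ofAdd v₁) * SemidirectProduct.inr g ∈ H)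
    (h₂ : SemidirectProduct.inl (Multiplicative.ofAdd v₂) * SemidirectProduct.inr g ∈ H) :
    (∃ x ∈ H, x * (SemidirectProduct.inl (Multiplicative.ofAdd v₂) *
        SemidirectProduct.inr g) * x⁻¹ =
      SemidirectProduct.inl (Multiplicative.ofAdd v₁) * SemidirectProduct.inr g)
    ↔ ∃ h : G, h * g = g * h ∧ ∃ w : M,
        v₁ - ρ h v₂ - (vh h - ρ g (vh h)) = (Fintype.card G) • (w - ρ g w) :=
  stmt11_general G M ρ H hinter vh hvh g v₁ v₂
end

section
/- Let M be a free ℤ-module with endomorphism φ and let N be a positive integer. Then there exists n ∈ ℕ such that for every m ∈ ℕ and every v ∈ M with φ(v) ∈ N^{m+n}·M, one can write v = v′ + k with k ∈ ker(φ) and v′ ∈ N^m·M. -/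
lemma keyZ (N : ℕ) (hN : 0 < N) (E : ℤ) (hE : E ≠ 0) (n m : ℕ) (hn : E.natAbs ≤ n)
    (a d : ℤ) (h : E * a = (N : ℤ) ^ (m + n) * d) : ((N : ℤ) ^ m ∣ a) := by
  rcases eq_or_ne a 0 with rfl | ha
  · exact dvd_zero _
  -- pass to natAbs
  have hnat : N ^ (m + n) ∣ E.natAbs * a.natAbs := by
    have : (N : ℤ) ^ (m + n) ∣ E * a := ⟨d, h⟩
    have := Int.natAbs_dvd_natAbs.mpr this
    simpa [Int.natAbs_mul, Int.natAbs_pow] using this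
  have hd : N ^ m ∣ a.natAbs := by
    rw [← Nat.factorization_le_iff_dvd (by positivity) (Int.natAbs_ne_zero.mpr ha)]
    intro p
    have hle := (Nat.factorization_le_iff_dvd (by positivity)
      (by simp [Int.natAbs_ne_zero, hE, ha] : E.natAbs * a.natAbs ≠ 0)).mpr hnat p
    rw [Nat.factorization_pow, Nat.factorization_mul (Int.natAbs_ne_zero.mpr hE)
      (Int.natAbs_ne_zero.mpr ha)] at hle
    simp only [Finsupp.coe_add, Finsupp.coe_smul, Pi.add_apply, Pi.smul_apply,
      smul_eq_mul] at hle ⊢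
    rw [Nat.factorization_pow]
    simp only [Finsupp.coe_smul, Pi.smul_apply, smul_eq_mul]
    rcases Nat.eq_zero_or_pos (N.factorization p) with h0 | hpos
    · simp [h0]
    · have hEp : E.natAbs.factorization p ≤ n * N.factorization p := by
        have h1 : E.natAbs.factorization p < E.natAbs :=
          Nat.factorization_lt p (Int.natAbs_ne_zero.mpr hE)
        have h2 : n ≤ n * N.factorization p := Nat.le_mul_of_pos_right n hpos
        omega
      have key : m * N.factorization p + n * N.factorization p ≤
          n * N.factorization p + a.natAbs.factorization p := by
        calc m * N.factorization p + n * N.factorization p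
            = (m + n) * N.factorization p := (add_mul m n _).symm
          _ ≤ E.natAbs.factorization p + a.natAbs.factorization p := hle
          _ ≤ n * N.factorization p + a.natAbs.factorization p := by omega
      omega
  obtain ⟨c, hc⟩ := hd
  have : (N : ℤ) ^ m ∣ (a.natAbs : ℤ) := ⟨c, by exact_mod_cast hc⟩
  rcases Int.natAbs_eq a with he | he
  · rwa [← he] at this
  · rw [he]; exact Dvd.dvd.neg_right this

/-- Lemma 4.3: for an endomorphism `φ` of a finitely generated free `ℤ`-module `M` and a
positive integer `N`, there is `n` such that whenever `φ(v) ∈ N^{m+n}·M`, one can write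
`v = v′ + k` with `k ∈ ker φ` and `v′ ∈ N^m·M`. -/
theorem stmt12 (M : Type*) [AddCommGroup M] [Module.Free ℤ M] [Module.Finite ℤ M]
    (φ : M →ₗ[ℤ] M) (N : ℕ) (hN : 0 < N) :
    ∃ n : ℕ, ∀ (m : ℕ) (v : M), (∃ w : M, φ v = ((N : ℤ) ^ (m + n)) • w) →
      ∃ v' k : M, v = v' + k ∧ φ k = 0 ∧ ∃ u : M, v' = ((N : ℤ) ^ m) • u := by
  classical
  let b := Module.Free.chooseBasis ℤ M
  obtain ⟨r, snf⟩ := (LinearMap.range φ).smithNormalForm b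
  set n := Finset.univ.sup fun i => (snf.a i).natAbs with hn
  refine ⟨n, ?_⟩
  rintro m v ⟨w, hw⟩
  set x : LinearMap.range φ := ⟨φ v, LinearMap.mem_range_self φ v⟩ with hxdef
  have ha : ∀ i, snf.a i ≠ 0 := by
    intro i h
    apply snf.bN.ne_zero i
    have h2 := snf.snf i
    rw [h, zero_smul] at h2
    exact Subtype.coe_injective h2
  have hdvd : ∀ i : Fin r, ((N : ℤ) ^ m) ∣ snf.bN.repr x i := by
    intro i
    have h1 : snf.bM.repr (x : M) (snf.f i) = snf.a i * snf.bN.repr x i := by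
      have h := snf.repr_apply_embedding_eq_repr_smul (m := x) (i := i)
      simpa using h
    have h2 : snf.bM.repr (x : M) (snf.f i)
        = (N : ℤ) ^ (m + n) * snf.bM.repr w (snf.f i) := by
      show snf.bM.repr (φ v) _ = _
      rw [hw, map_smul]
      simp
    exact keyZ N hN (snf.a i) (ha i) n m (by exact Finset.le_sup (f := fun j => (snf.a j).natAbs) (Finset.mem_univ i)) _ _
      (by rw [← h1, h2])
  choose q hq using hdvd
  set s : LinearMap.range φ := ∑ i, q i • snf.bN i with hs
  have hxs : ((N : ℤ) ^ m) • s = x := by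
    rw [hs, Finset.smul_sum]
    have : ∀ i ∈ Finset.univ, ((N : ℤ) ^ m) • q i • snf.bN i
        = snf.bN.repr x i • snf.bN i := by
      intro i _
      rw [smul_smul, ← hq i]
    rw [Finset.sum_congr rfl this]
    exact snf.bN.sum_repr x
  obtain ⟨u, hu⟩ := s.2
  refine ⟨((N : ℤ) ^ m) • u, v - ((N : ℤ) ^ m) • u, by abel, ?_, ⟨u, rfl⟩⟩
  have hφv : φ v = ((N : ℤ) ^ m) • (s : M) := by
    have := congrArg (Subtype.val) hxs
    simpa [hxdef] using this.symm
  rw [map_sub, map_smul, hu, hφv, sub_self]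
end

section
/- Let M be a free ℤ-module of finite rank containing radical submodules M₁ and M₂ (M_i contains the radical of all its elements), and let N be a positive integer. Then there exists n ∈ ℕ such that for all v₁ ∈ M₁, v₂ ∈ M₂ and m ∈ ℕ with v₁ − v₂ ∈ N^{m+n}·M, there exists v₂′ ∈ M₁ ∩ M₂ with v₁ − v₂′ ∈ N^m·M. -/
/-- Lemma 4.2: for radical submodules `M₁, M₂` of a finitely generated free `ℤ`-module `M`
and a positive integer `N`, there is `n` such that whenever `v₁ ∈ M₁`, `v₂ ∈ M₂` and
`v₁ − v₂ ∈ N^{m+n}·M`, there is `v₂′ ∈ M₁ ∩ M₂` with `v₁ − v₂′ ∈ N^m·M`. -/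
theorem stmt13 (M : Type*) [AddCommGroup M] [Module.Free ℤ M] [Module.Finite ℤ M]
    (M₁ M₂ : Submodule ℤ M)
    (hrad₁ : ∀ r : ℤ, r ≠ 0 → ∀ x : M, r • x ∈ M₁ → x ∈ M₁)
    (hrad₂ : ∀ r : ℤ, r ≠ 0 → ∀ x : M, r • x ∈ M₂ → x ∈ M₂)
    (N : ℕ) (hN : 0 < N) :
    ∃ n : ℕ, ∀ v₁ ∈ M₁, ∀ v₂ ∈ M₂, ∀ m : ℕ,
      (∃ w : M, v₁ - v₂ = ((N : ℤ) ^ (m + n)) • w) →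
      ∃ v₂' ∈ M₁ ⊓ M₂, ∃ u : M, v₁ - v₂' = ((N : ℤ) ^ m) • u := by
  classical
  set P : Submodule ℤ M := M₁ ⊔ M₂ with hPdef
  -- The saturation of P
  let S : Submodule ℤ M :=
    { carrier := {w | ∃ r : ℤ, r ≠ 0 ∧ r • w ∈ P}
      add_mem' := by
        rintro a b ⟨r, hr, hra⟩ ⟨s, hs, hsb⟩
        refine ⟨r * s, mul_ne_zero hr hs, ?_⟩
        have : (r * s) • (a + b) = s • (r • a) + r • (s • b) := by
          rw [smul_add, show (r * s) • a = s • (r • a) by rw [mul_comm, mul_smul],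
            mul_smul]
        rw [this]
        exact P.add_mem (P.smul_mem s hra) (P.smul_mem r hsb)
      zero_mem' := ⟨1, one_ne_zero, by simp⟩
      smul_mem' := by
        rintro t a ⟨r, hr, hra⟩
        refine ⟨r, hr, ?_⟩
        rw [smul_comm]
        exact P.smul_mem t hra }
  have hSmem : ∀ w : M, w ∈ S ↔ ∃ r : ℤ, r ≠ 0 ∧ r • w ∈ P := fun w => Iff.rfl
  obtain ⟨T, hT⟩ : S.FG := (isNoetherian_def.mp inferInstance) S
  choose! r hr0 hrP using fun x (hx : x ∈ T) =>
    (hSmem x).mp (hT ▸ Submodule.subset_span (hx : x ∈ (T : Set M)))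
  set c : ℤ := ∏ x ∈ T, |r x| with hcdef
  have hc0 : 0 < c := Finset.prod_pos fun x hx => abs_pos.mpr (hr0 x hx)
  set c0 : ℕ := c.natAbs with hc0def
  have hc0pos : 0 < c0 := Int.natAbs_pos.mpr hc0.ne'
  have hcval : (c0 : ℤ) = c := Int.natAbs_of_nonneg hc0.le
  -- c0 kills the torsion: c0 • w ∈ P for all w ∈ S
  have hcS : ∀ w ∈ S, (c0 : ℤ) • w ∈ P := by
    intro w hw
    have hle : S ≤ P.comap ((c0 : ℤ) • (LinearMap.id : M →ₗ[ℤ] M)) := by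
      rw [← hT, Submodule.span_le]
      intro x hx
      simp only [SetLike.mem_coe, Submodule.mem_comap, LinearMap.smul_apply, LinearMap.id_apply]
      have hdvd : r x ∣ c := (abs_dvd (r x) c).mp
        (Finset.dvd_prod_of_mem (fun y => |r y|) hx)
      obtain ⟨k, hk⟩ := hdvd
      rw [hcval, hk, mul_comm, mul_smul]
      exact P.smul_mem k (hrP x hx)
    simpa using hle hw
  refine ⟨c0, ?_⟩
  intro v₁ hv₁ v₂ hv₂ m ⟨w, hw⟩
  -- v₁ - v₂ ∈ P
  have hsub : v₁ - v₂ ∈ P := by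
    rw [sub_eq_add_neg]
    exact P.add_mem (Submodule.mem_sup_left hv₁) (Submodule.mem_sup_right (M₂.neg_mem hv₂))
  have hNK : ((N : ℤ) ^ (m + c0)) ≠ 0 := pow_ne_zero _ (by exact_mod_cast hN.ne')
  have hwS : w ∈ S := (hSmem w).mpr ⟨_, hNK, hw ▸ hsub⟩
  have hKw : ((N : ℤ) ^ (m + c0)) • w ∈ P := hw ▸ hsub
  have hcw : (c0 : ℤ) • w ∈ P := hcS w hwS
  -- g = gcd(c0, N^(m+c0)) and g ∣ N^c0
  set g : ℕ := Nat.gcd c0 (N ^ (m + c0)) with hgdef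
  have hg0 : g ≠ 0 := Nat.gcd_ne_zero_left hc0pos.ne'
  have hgdvdc : g ∣ c0 := Nat.gcd_dvd_left _ _
  have hgdvdK : g ∣ N ^ (m + c0) := Nat.gcd_dvd_right _ _
  have hgN : g ∣ N ^ c0 := by
    rw [← Nat.factorization_le_iff_dvd hg0 (pow_ne_zero _ hN.ne')]
    intro p
    by_cases hp : g.factorization p = 0
    · simp [hp]
    · have hpp : p.Prime := Nat.prime_of_mem_primeFactors
        (by rw [← Nat.support_factorization]; exact Finsupp.mem_support_iff.mpr hp)
      have hpN : p ∣ N := hpp.dvd_of_dvd_pow ((Nat.dvd_of_factorization_pos hp).trans hgdvdK)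
      have h1 : g.factorization p ≤ c0.factorization p :=
        (Nat.factorization_le_iff_dvd hg0 hc0pos.ne').mpr hgdvdc p
      have h2 : c0.factorization p < c0 := Nat.factorization_lt p hc0pos.ne'
      have h3 : 1 ≤ N.factorization p := by
        have := (Nat.Prime.factorization_pos_of_dvd hpp hN.ne' hpN)
        omega
      calc g.factorization p ≤ c0 := by omega
        _ ≤ c0 * N.factorization p := Nat.le_mul_of_pos_right _ (by omega)
        _ = (N ^ c0).factorization p := by
            rw [Nat.factorization_pow]; simp [mul_comm]
  -- Bezout: g • w ∈ P
  have hgw : (g : ℤ) • w ∈ P := by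
    have hgcd : (Int.gcd (c0 : ℤ) ((N : ℤ) ^ (m + c0)) : ℤ) = (g : ℤ) := by
      rw [show ((N : ℤ) ^ (m + c0)) = ((N ^ (m + c0) : ℕ) : ℤ) by push_cast; ring,
        Int.gcd_natCast_natCast]
    have hb := Int.gcd_eq_gcd_ab (c0 : ℤ) ((N : ℤ) ^ (m + c0))
    rw [hgcd] at hb
    rw [hb, add_smul, mul_comm ((c0:ℤ)) _, mul_smul, mul_comm ((N:ℤ)^(m+c0)) _, mul_smul]
    exact P.add_mem (P.smul_mem _ hcw) (P.smul_mem _ hKw)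
  -- N^c0 • w ∈ P
  have hNw : ((N : ℤ) ^ c0) • w ∈ P := by
    obtain ⟨k, hk⟩ := hgN
    have : ((N : ℤ) ^ c0) = (k : ℤ) * (g : ℤ) := by
      rw [show ((N : ℤ) ^ c0) = ((N ^ c0 : ℕ) : ℤ) by push_cast; ring, hk]
      push_cast; ring
    rw [this, mul_smul]
    exact P.smul_mem _ hgw
  obtain ⟨a, ha, b, hb, hab⟩ := Submodule.mem_sup.mp hNw
  refine ⟨v₁ - ((N : ℤ) ^ m) • a, ?_, a, by abel⟩
  constructor
  · exact M₁.sub_mem hv₁ (M₁.smul_mem _ ha)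
  · have : v₁ - ((N : ℤ) ^ m) • a = v₂ + ((N : ℤ) ^ m) • b := by
      have h1 : v₁ - v₂ = ((N : ℤ) ^ m) • (a + b) := by
        rw [hw, hab, ← mul_smul, ← pow_add]
      rw [smul_add] at h1
      have := sub_eq_iff_eq_add.mp h1
      rw [this]; abel
    rw [this]
    exact M₂.add_mem hv₂ (M₂.smul_mem _ hb)
end

section
/- Let ρ : G → Aut(M) be a representation of a finite group on a free ℤ-module of finite rank and let N be a positive integer. Then there exists n ∈ ℕ such that for every m > 0 and every v ∈ M, letting H = {h ∈ G : v − ρ(h)v ∈ N^{n+m}·M}, there exists k ∈ M with ρ(h)k = k for all h ∈ H and v − k ∈ N^m·M. -/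
/-!
By the Artin–Rees lemma, for a linear map `f : M → M'` into a finite module over a Noetherian
ring there is `k` with `I^(k+m) M' ∩ f(M) ⊆ I^m f(M)` for all `m`; so if `f v ∈ I^(k+m) M'` then
`f v = f u` with `u ∈ I^m M`, and `v - u` is a kernel element `I^m`-close to `v`. Applying this
to `v ↦ (v - ρ(h) v)_{h ∈ S}` for each of the finitely many subsets `S ⊆ G` and taking the
largest `k` gives the uniform `n`.
-/

section

open Filter Submodule

variable {R M M' : Type*} [CommRing R] [AddCommGroup M] [Module R M]
  [AddCommGroup M'] [Module R M']

theorem Submodule.mem_span_singleton_pow_smul_top_iff (r : R) (n : ℕ) (x : M) :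
    x ∈ Ideal.span {r} ^ n • (⊤ : Submodule R M) ↔ ∃ w, x = r ^ n • w := by
  simp [Ideal.span_singleton_pow, ideal_span_singleton_smul, mem_smul_pointwise_iff_exists,
    eq_comm]

theorem LinearMap.eventually_comap_pow_smul_top_le_ker_sup [IsNoetherianRing R]
    [Module.Finite R M'] (I : Ideal R) (f : M →ₗ[R] M') :
    ∀ᶠ k in atTop, ∀ m, (I ^ (k + m) • ⊤ : Submodule R M').comap f ≤ ker f ⊔ I ^ m • ⊤ := by
  obtain ⟨k₀, hk₀⟩ := I.exists_pow_inf_eq_pow_smul (range f)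
  filter_upwards [eventually_ge_atTop k₀] with k hk m v hv
  have hle : I ^ (k + m) • ⊤ ⊓ range f ≤ (I ^ m • ⊤ : Submodule R M).map f :=
    calc I ^ (k + m) • ⊤ ⊓ range f
      _ = I ^ (k + m - k₀) • (I ^ k₀ • ⊤ ⊓ range f) := hk₀ _ (by omega)
      _ ≤ I ^ m • range f := smul_mono (Ideal.pow_le_pow_right (by omega)) inf_le_right
      _ = (I ^ m • ⊤ : Submodule R M).map f := by rw [map_smul'', range_eq_map]
  obtain ⟨u, hu, hfu⟩ := hle ⟨hv, v, rfl⟩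
  exact mem_sup.2 ⟨v - u, by simp [hfu], u, hu, sub_add_cancel v u⟩

theorem exists_pow_approx_by_common_ker [IsNoetherianRing R] [Module.Finite R M']
    {ι : Type*} [Finite ι] (f : ι → M →ₗ[R] M') (r : R) :
    ∃ n : ℕ, ∀ (m : ℕ) (v : M), ∃ k : M,
      (∀ i, (∃ w, f i v = r ^ (n + m) • w) → f i k = 0) ∧ ∃ u, v - k = r ^ m • u := by
  obtain ⟨n, hn⟩ := (eventually_all.2 fun s : Set ι =>
    (LinearMap.pi fun i : s => f i).eventually_comap_pow_smul_top_le_ker_sup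
      (Ideal.span {r})).exists
  refine ⟨n, fun m v => ?_⟩
  set s : Set ι := {i | ∃ w, f i v = r ^ (n + m) • w}
  have hv : v ∈ (Ideal.span {r} ^ (n + m) • ⊤ : Submodule R (s → M')).comap
      (LinearMap.pi fun i : s => f i) := by
    choose w hw using fun i : s => i.2
    exact (mem_span_singleton_pow_smul_top_iff _ _ _).2 ⟨w, funext hw⟩
  obtain ⟨k, hk, u, hu, rfl⟩ := mem_sup.1 (hn s m hv)
  obtain ⟨w, rfl⟩ := (mem_span_singleton_pow_smul_top_iff _ _ _).1 hu
  exact ⟨k, fun i hi => congrFun (LinearMap.mem_ker.1 hk) ⟨i, hi⟩, w, add_sub_cancel_left k _⟩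

end

theorem stmt14_general (G : Type*) [Group G] [Finite G]
    (M : Type*) [AddCommGroup M] [Module.Finite ℤ M]
    (ρ : G →* (M ≃ₗ[ℤ] M)) (N : ℕ) :
    ∃ n : ℕ, ∀ m : ℕ, 0 < m → ∀ v : M, ∃ k : M,
      (∀ h : G, (∃ w : M, v - ρ h v = ((N : ℤ) ^ (n + m)) • w) → ρ h k = k) ∧
      ∃ u : M, v - k = ((N : ℤ) ^ m) • u := by
  obtain ⟨n, hn⟩ := exists_pow_approx_by_common_ker
    (fun h : G => LinearMap.id - (ρ h).toLinearMap) (N : ℤ)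
  refine ⟨n, fun m _ v => ?_⟩
  obtain ⟨k, hk, hvk⟩ := hn m v
  exact ⟨k, fun h hh => (sub_eq_zero.1 (hk h hh)).symm, hvk⟩

/-- Lemma 4.4: for a representation `ρ` of a finite group `G` on a finitely generated free
`ℤ`-module `M` and a positive integer `N`, there is `n` such that for every `m > 0` and
`v ∈ M`, with `H = {h ∈ G ∣ v − ρ(h)v ∈ N^{n+m}·M}`, there exists `k ∈ M` fixed by all
`ρ(h)`, `h ∈ H`, with `v − k ∈ N^m·M`. -/
theorem stmt14 (G : Type*) [Group G] [Finite G]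
    (M : Type*) [AddCommGroup M] [Module.Free ℤ M] [Module.Finite ℤ M]
    (ρ : G →* (M ≃ₗ[ℤ] M)) (N : ℕ) (hN : 0 < N) :
    ∃ n : ℕ, ∀ m : ℕ, 0 < m → ∀ v : M, ∃ k : M,
      (∀ h : G, (∃ w : M, v - ρ h v = ((N : ℤ) ^ (n + m)) • w) → ρ h k = k) ∧
      ∃ u : M, v - k = ((N : ℤ) ^ m) • u :=
  stmt14_general G M ρ N
end

section
/- Let G be a finite group with g ∈ Z(G), and let ρ : G → Aut(M) be an irreducible (over ℚ) representation on a finitely generated free ℤ-module M such that ρ(g) ≠ id. Then |G|·M ⊆ Im(id_M − ρ(g)). -/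
/-!
Let `T = ρ(g)` have order `n`, so that `n ∣ |G|` and `n ≠ 1`. For a proper divisor `d` of `n`,
the kernel of `Φ_d(T)` on `ℚ ⊗ M` is a subrepresentation because `g` is central; it cannot be
everything (else `T^d = 1`), so by irreducibility `Φ_d(T)` is injective. Since
`X^n - 1 = Φ_n · ∏_{d} Φ_d`, this forces `Φ_n(T) = 0`. Writing `Φ_n = (X - 1) q + Φ_n(1)` then
gives `Φ_n(1) • M ⊆ Im(1 - T)`, and `Φ_n(1) ∣ n ∣ |G|`.
-/

open TensorProduct

open Polynomial

theorem Polynomial.eval_one_cyclotomic_dvd (R : Type*) [CommRing R] {n : ℕ} (hn : n ≠ 1) :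
    (cyclotomic n R).eval 1 ∣ n := by
  simpa [eval_geom_sum] using
    _root_.map_dvd (evalRingHom 1) (cyclotomic_dvd_geom_sum_of_dvd R dvd_rfl hn)

namespace Module.End

variable {R M : Type*} [CommRing R] [AddCommGroup M] [Module R M]

theorem exists_smul_eval_one_eq_sub_of_aeval_eq_zero {T : Module.End R M} {p : R[X]}
    (hp : aeval T p = 0) (v : M) : ∃ u, p.eval 1 • v = u - T u := by
  obtain ⟨q, hq⟩ := X_sub_C_dvd_sub_C_eval (a := (1 : R)) (p := p)
  refine ⟨aeval T q v, ?_⟩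
  have h := congr($(congrArg (aeval T) hq) v)
  simp only [aeval_sub, hp, aeval_C, zero_sub, LinearMap.neg_apply, algebraMap_end_apply,
    map_one, map_mul, aeval_X, mul_apply, LinearMap.sub_apply, one_apply] at h
  rw [← neg_sub, ← h, neg_neg]

theorem aeval_cyclotomic_eq_zero_of_pow_eq_one {T : Module.End R M} {n : ℕ} (hn : 0 < n)
    (hT : T ^ n = 1)
    (h : ∀ d ∈ n.properDivisors, Function.Injective (aeval T (cyclotomic d R))) :
    aeval T (cyclotomic n R) = 0 := by
  have hsplit : (∏ d ∈ n.properDivisors, cyclotomic d R) * cyclotomic n R = X ^ n - 1 := by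
    rw [← prod_cyclotomic_eq_X_pow_sub_one hn, ← Nat.cons_self_properDivisors hn.ne',
      Finset.prod_cons, mul_comm]
  have hzero :
      aeval T (∏ d ∈ n.properDivisors, cyclotomic d R) * aeval T (cyclotomic n R) = 0 := by
    simp [← map_mul, hsplit, hT]
  have hinj : Function.Injective (aeval T (∏ d ∈ n.properDivisors, cyclotomic d R)) :=
    Finset.prod_induction _ (fun q => Function.Injective (aeval T q))
      (fun _ _ ha hb => by rw [map_mul, coe_mul]; exact ha.comp hb)
      (by rw [map_one, coe_one]; exact Function.injective_id) h
  ext v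
  exact hinj (by simpa using congr($hzero v))

theorem aeval_cyclotomic_orderOf_eq_zero {T : Module.End R M} (hT : IsOfFinOrder T)
    (h : ∀ d, Function.Injective (aeval T (cyclotomic d R)) ∨ aeval T (cyclotomic d R) = 0) :
    aeval T (cyclotomic (orderOf T) R) = 0 := by
  refine aeval_cyclotomic_eq_zero_of_pow_eq_one hT.orderOf_pos (pow_orderOf_eq_one T)
    fun d hd => (h d).resolve_right fun hzero => ?_
  obtain ⟨hdvd, hlt⟩ := Nat.mem_properDivisors.mp hd
  have hTd : T ^ d = 1 := by
    obtain ⟨q, hq⟩ := cyclotomic.dvd_X_pow_sub_one d R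
    simpa [hzero, sub_eq_zero] using congrArg (aeval T) hq
  exact hlt.not_ge <| Nat.le_of_dvd (Nat.pos_of_dvd_of_pos hdvd hT.orderOf_pos)
    (orderOf_dvd_of_pow_eq_one hTd)

end Module.End

section BaseChange

variable {R S M N : Type*} [CommRing R] [CommRing S] [Algebra R S] [FaithfulSMul R S]
  [AddCommGroup M] [Module R M] [AddCommGroup N] [Module R N]

theorem LinearMap.injective_of_injective_baseChange [Module.Flat R M] {f : M →ₗ[R] N}
    (hf : Function.Injective (f.baseChange S)) : Function.Injective f := by
  intro x y hxy
  apply Module.Flat.tensorProduct_mk_injective R M S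
  exact hf (by simp [hxy])

theorem LinearMap.eq_zero_of_baseChange_eq_zero [Module.Flat R N] {f : M →ₗ[R] N}
    (hf : f.baseChange S = 0) : f = 0 :=
  LinearMap.baseChangeHom_injective R M S (by simpa using hf)

theorem injective_or_eq_zero_aeval_of_mem_center {G : Type*} [Group G] [Module.Flat R M]
    (ρ : G →* (M ≃ₗ[R] M))
    (hirr : ∀ W : Submodule S (S ⊗[R] M),
      (∀ g : G, W.map (LinearMap.baseChange S (ρ g : M →ₗ[R] M)) ≤ W) → W = ⊥ ∨ W = ⊤)
    {g : G} (hg : g ∈ Subgroup.center G) (p : R[X]) :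
    Function.Injective (aeval (ρ g : Module.End R M) p) ∨ aeval (ρ g : Module.End R M) p = 0 := by
  set P := aeval (ρ g : Module.End R M) p
  have hcomm (h : G) : Commute ((ρ h : Module.End R M).baseChange S) (P.baseChange S) := by
    have hgh : Commute (ρ h : Module.End R M) (ρ g) :=
      (Commute.map (Subgroup.mem_center_iff.mp hg h) ρ).map
        LinearEquiv.automorphismGroup.toLinearMapMonoidHom
    exact (Algebra.commute_of_mem_adjoin_singleton_of_commute
      (aeval_mem_adjoin_singleton R _) hgh).map (Module.End.baseChangeHom R S M)
  have hinv (h : G) : (LinearMap.ker (P.baseChange S)).map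
      (LinearMap.baseChange S (ρ h : M →ₗ[R] M)) ≤ LinearMap.ker (P.baseChange S) := by
    rintro _ ⟨x, hx, rfl⟩
    rw [LinearMap.mem_ker, ← Module.End.mul_apply, ← (hcomm h).eq, Module.End.mul_apply,
      LinearMap.mem_ker.mp hx, map_zero]
  rcases hirr _ hinv with hbot | htop
  · exact .inl (LinearMap.injective_of_injective_baseChange (LinearMap.ker_eq_bot.mp hbot))
  · exact .inr (LinearMap.eq_zero_of_baseChange_eq_zero (LinearMap.ker_eq_top.mp htop))

end BaseChange

theorem stmt15_general (G : Type*) [Group G] [Fintype G]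
    (M : Type*) [AddCommGroup M] [Module.Free ℤ M]
    (ρ : G →* (M ≃ₗ[ℤ] M))
    (hirr : ∀ W : Submodule ℚ (ℚ ⊗[ℤ] M),
      (∀ g : G, W.map (LinearMap.baseChange ℚ (ρ g : M →ₗ[ℤ] M)) ≤ W) → W = ⊥ ∨ W = ⊤)
    (g : G) (hg : g ∈ Subgroup.center G) (hnt : ρ g ≠ 1) :
    ∀ v : M, ∃ u : M, (Fintype.card G : ℤ) • v = u - ρ g u := by
  set T : Module.End ℤ M := (ρ g : M →ₗ[ℤ] M)
  let σ := LinearEquiv.automorphismGroup.toLinearMapMonoidHom.comp ρ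
  have hcyc : aeval T (cyclotomic (orderOf T) ℤ) = 0 :=
    Module.End.aeval_cyclotomic_orderOf_eq_zero (σ.isOfFinOrder (isOfFinOrder_of_finite g))
      fun _ => injective_or_eq_zero_aeval_of_mem_center ρ hirr hg _
  have hT : orderOf T ≠ 1 := fun h =>
    hnt (LinearEquiv.toLinearMap_injective (orderOf_eq_one_iff.mp h))
  have hdvd : orderOf T ∣ Fintype.card G := (orderOf_map_dvd σ g).trans orderOf_dvd_card
  intro v
  obtain ⟨k, hk⟩ := (eval_one_cyclotomic_dvd ℤ hT).trans (Int.natCast_dvd_natCast.mpr hdvd)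
  obtain ⟨u, hu⟩ := Module.End.exists_smul_eval_one_eq_sub_of_aeval_eq_zero hcyc (k • v)
  exact ⟨u, by rw [hk, mul_smul, hu]; rfl⟩

/-- Lemma 4.8: if `g` is central in the finite group `G` and `ρ : G → Aut(M)` is a
`ℚ`-irreducible representation on a finitely generated free `ℤ`-module on which `g` acts
non-trivially, then `|G|·M ⊆ W_g(M) = Im(id − ρ(g))`. -/
theorem stmt15 (G : Type*) [Group G] [Fintype G]
    (M : Type*) [AddCommGroup M] [Module.Free ℤ M] [Module.Finite ℤ M]
    (ρ : G →* (M ≃ₗ[ℤ] M))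
    (hirr : ∀ W : Submodule ℚ (ℚ ⊗[ℤ] M),
      (∀ g : G, W.map (LinearMap.baseChange ℚ (ρ g : M →ₗ[ℤ] M)) ≤ W) → W = ⊥ ∨ W = ⊤)
    (g : G) (hg : g ∈ Subgroup.center G) (hnt : ρ g ≠ 1) :
    ∀ v : M, ∃ u : M, (Fintype.card G : ℤ) • v = u - ρ g u :=
  stmt15_general G M ρ hirr g hg hnt
end

section
/- Let G be a central extension setting: G finite with g ∈ Z(G), ρ : G → Aut(M) a representation on a free ℤ-module of finite rank. Write M ⊗ ℚ = N₁ ⊕ ⋯ ⊕ N_m as a direct sum of ℚ-irreducible subrepresentations and let I = {i : ρ(g) does not act as the identity on N_i}. Then V_g(M) := √(Im(id_M − ρ(g))) (the radical in M) equals M ∩ ⊕_{i∈I} N_i. -/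
/-!
Since `g` is central, `φ = id − ρ(g)` commutes with the action of `G`, so `φ(Nᵢ)` is a
subrepresentation of the irreducible `Nᵢ`: it is `0` or all of `Nᵢ`. Hence the image of `φ` on
`ℚ ⊗ M` is `⨁_{i ∈ I} Nᵢ`. As `ℚ ⊗ M` is the localization of the torsion-free module `M` at the
nonzero integers, `v ∈ M` lies in the radical of `Im φ` exactly when `1 ⊗ v` lies in the image
of `φ` on `ℚ ⊗ M`.
-/

open TensorProduct

theorem TensorProduct.mk_rat_one_injective (M : Type*) [AddCommGroup M]
    [Module.IsTorsionFree ℤ M] : Function.Injective (TensorProduct.mk ℤ ℚ M 1) := by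
  rw [IsLocalizedModule.injective_iff_isRegular (nonZeroDivisors ℤ)]
  exact fun c => IsSMulRegular.of_ne_zero (nonZeroDivisors.coe_ne_zero c)

theorem exists_zsmul_eq_iff_tmul_mem_range {M M' : Type*} [AddCommGroup M] [AddCommGroup M']
    [Module.IsTorsionFree ℤ M'] (f : M →ₗ[ℤ] M') (v : M') :
    (∃ r : ℤ, r ≠ 0 ∧ ∃ u, r • v = f u) ↔
      (1 : ℚ) ⊗ₜ[ℤ] v ∈ LinearMap.range (f.baseChange ℚ) := by
  constructor
  · rintro ⟨r, hr, u, hu⟩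
    refine ⟨(r : ℚ)⁻¹ ⊗ₜ u, ?_⟩
    rw [LinearMap.baseChange_tmul, ← hu, ← smul_tmul, zsmul_eq_mul,
      mul_inv_cancel₀ (by exact_mod_cast hr)]
  · rintro ⟨w, hw⟩
    obtain ⟨⟨u, s⟩, hs⟩ :=
      IsLocalizedModule.surj (nonZeroDivisors ℤ) (TensorProduct.mk ℤ ℚ M 1) w
    refine ⟨s, nonZeroDivisors.coe_ne_zero s, u, TensorProduct.mk_rat_one_injective M' ?_⟩
    simp only [TensorProduct.mk_apply] at hs ⊢
    rw [tmul_smul, ← hw, ← LinearMap.map_smul_of_tower, ← Submonoid.smul_def, hs,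
      LinearMap.baseChange_tmul]

section Decomposition

variable {R M : Type*} [Semiring R] [AddCommMonoid M] [Module R M]

theorem Submodule.map_eq_bot_or_eq_of_forall_commute {G : Type*} {ψ : G → Module.End R M}
    {φ : Module.End R M} {N : Submodule R M} (hcomm : ∀ h, Commute φ (ψ h))
    (hφ : N.map φ ≤ N) (hN : ∀ h, N.map (ψ h) ≤ N)
    (hirr : ∀ W ≤ N, (∀ h, W.map (ψ h) ≤ W) → W = ⊥ ∨ W = N) :
    N.map φ = ⊥ ∨ N.map φ = N := by
  refine hirr _ hφ fun h => ?_
  rw [← Submodule.map_comp, ← Module.End.mul_eq_comp, ← (hcomm h).eq, Module.End.mul_eq_comp,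
    Submodule.map_comp]
  exact Submodule.map_mono (hN h)

theorem LinearMap.range_eq_iSup_of_map_eq_bot_or_eq {ι : Type*} (φ : Module.End R M)
    {N : ι → Submodule R M} (htop : ⨆ i, N i = ⊤)
    (h : ∀ i, (N i).map φ = ⊥ ∨ (N i).map φ = N i) :
    LinearMap.range φ = ⨆ (i) (_ : ¬ N i ≤ LinearMap.ker φ), N i := by
  rw [LinearMap.range_eq_map, ← htop, Submodule.map_iSup]
  refine iSup_congr fun i => ?_
  by_cases hi : N i ≤ LinearMap.ker φ
  · rw [iSup_neg (not_not_intro hi), ← LinearMap.le_ker_iff_map.mp hi]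
  · rw [iSup_pos hi, (h i).resolve_left (mt LinearMap.le_ker_iff_map.mpr hi)]

end Decomposition

theorem stmt17_general (G : Type*) [Group G]
    (M : Type*) [AddCommGroup M] [Module.Free ℤ M]
    (ρ : G →* (M ≃ₗ[ℤ] M)) (g : G) (hg : g ∈ Subgroup.center G)
    (ι : Type*) [DecidableEq ι]
    (N : ι → Submodule ℚ (ℚ ⊗[ℤ] M))
    (hinternal : DirectSum.IsInternal N)
    (hinv : ∀ (i : ι) (h : G),
      (N i).map (LinearMap.baseChange ℚ (ρ h : M →ₗ[ℤ] M)) ≤ N i)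
    (hirr : ∀ (i : ι) (W : Submodule ℚ (ℚ ⊗[ℤ] M)), W ≤ N i →
      (∀ h : G, W.map (LinearMap.baseChange ℚ (ρ h : M →ₗ[ℤ] M)) ≤ W) →
      W = ⊥ ∨ W = N i) :
    ∀ v : M,
      (∃ r : ℤ, r ≠ 0 ∧ ∃ u : M, r • v = u - ρ g u) ↔
      ((1 : ℚ) ⊗ₜ[ℤ] v ∈
        ⨆ (i : ι) (_ : ¬ ∀ x ∈ N i, LinearMap.baseChange ℚ (ρ g : M →ₗ[ℤ] M) x = x), N i) := by
  let ρℤ : G →* Module.End ℤ M := LinearEquiv.automorphismGroup.toLinearMapMonoidHom.comp ρ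
  let ψ : G →* Module.End ℚ (ℚ ⊗[ℤ] M) :=
    (Module.End.baseChangeHom ℤ ℚ M).toMonoidHom.comp ρℤ
  have hcomm : ∀ h, Commute (1 - ψ g) (ψ h) := fun h =>
    (Commute.one_left _).sub_left
      ((show Commute g h from (Subgroup.mem_center_iff.mp hg h).symm).map ψ)
  have hfixed : ∀ i, N i ≤ LinearMap.ker (1 - ψ g) ↔ ∀ x ∈ N i, ψ g x = x := fun i =>
    forall₂_congr fun x _ => by
      rw [LinearMap.mem_ker, LinearMap.sub_apply, Module.End.one_apply, sub_eq_zero, eq_comm]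
  have hrange : LinearMap.range (1 - ψ g) = ⨆ (i) (_ : ¬ ∀ x ∈ N i, ψ g x = x), N i := by
    rw [LinearMap.range_eq_iSup_of_map_eq_bot_or_eq _ hinternal.submodule_iSup_eq_top]
    · simp only [hfixed]
    · refine fun i => Submodule.map_eq_bot_or_eq_of_forall_commute hcomm ?_ (hinv i) (hirr i)
      rintro _ ⟨x, hx, rfl⟩
      exact sub_mem hx (hinv i g ⟨x, hx, rfl⟩)
  have hbaseChange : (1 - ρℤ g).baseChange ℚ = 1 - ψ g := by
    rw [LinearMap.baseChange_sub, LinearMap.baseChange_one]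
    rfl
  intro v
  rw [← hbaseChange] at hrange
  exact (exists_zsmul_eq_iff_tmul_mem_range _ v).trans (Iff.of_eq (congrArg (_ ∈ ·) hrange))

/-- Lemma 4.10: let `g` be central in the finite group `G`, `ρ : G → Aut(M)` a representation
on a finitely generated free `ℤ`-module, and `M ⊗ ℚ = ⨁ᵢ N i` a decomposition into
`ℚ`-irreducible subrepresentations. With `I = {i ∣ ρ(g) does not act as the identity on N i}`,
the radical `V_g(M)` of `Im(id − ρ(g))` equals `M ∩ ⨁_{i ∈ I} N i`. -/
theorem stmt17 (G : Type*) [Group G] [Fintype G]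
    (M : Type*) [AddCommGroup M] [Module.Free ℤ M] [Module.Finite ℤ M]
    (ρ : G →* (M ≃ₗ[ℤ] M)) (g : G) (hg : g ∈ Subgroup.center G)
    (ι : Type*) [Fintype ι] [DecidableEq ι]
    (N : ι → Submodule ℚ (ℚ ⊗[ℤ] M))
    (hinternal : DirectSum.IsInternal N)
    (hinv : ∀ (i : ι) (h : G),
      (N i).map (LinearMap.baseChange ℚ (ρ h : M →ₗ[ℤ] M)) ≤ N i)
    (hne : ∀ i : ι, N i ≠ ⊥)
    (hirr : ∀ (i : ι) (W : Submodule ℚ (ℚ ⊗[ℤ] M)), W ≤ N i →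
      (∀ h : G, W.map (LinearMap.baseChange ℚ (ρ h : M →ₗ[ℤ] M)) ≤ W) →
      W = ⊥ ∨ W = N i) :
    ∀ v : M,
      (∃ r : ℤ, r ≠ 0 ∧ ∃ u : M, r • v = u - ρ g u) ↔
      ((1 : ℚ) ⊗ₜ[ℤ] v ∈
        ⨆ (i : ι) (_ : ¬ ∀ x ∈ N i, LinearMap.baseChange ℚ (ρ g : M →ₗ[ℤ] M) x = x), N i) :=
  stmt17_general G M ρ g hg ι N hinternal hinv hirr
end

section
/- Let m be a positive integer, R an integral domain with at least m+1 elements, M₁ an R-module with a G-action and V₁ ⊆ M₁ a radical G-invariant submodule. For λ ∈ R define φ_λ : M₁^{l+1} → M₁^l by φ_λ(v₀,…,v_l) = (v₁−v₀, …, v_{l−1}−v₀, v_l − λ·v₀). Then for distinct λ₁ ≠ λ₂ in R, (ker φ_{λ₁} + V₁^{l+1}) ∩ (ker φ_{λ₂} + V₁^{l+1}) = V₁^{l+1}. Consequently, for any set Λ ⊆ R of m+1 elements and any subset 𝔐 ⊆ M₁^{l+1} with |𝔐| ≤ m and 𝔐 ∩ V₁^{l+1} = ∅, there exists λ ∈ Λ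 with φ_λ(𝔐) ∩ V₁^l = ∅. -/
/-- The map `φ_λ : M₁^{l+1} → M₁^l`, `(v₀,…,v_l) ↦ (v₁ − v₀, …, v_{l−1} − v₀, v_l − λ·v₀)`. -/
def phiMap {R M₁ : Type*} [CommRing R] [AddCommGroup M₁] [Module R M₁]
    (l : ℕ) (lam : R) (v : Fin (l + 1) → M₁) : Fin l → M₁ :=
  fun i => v i.succ - (if (i : ℕ) = l - 1 then lam else (1 : R)) • v 0

lemma phiMap_add {R M₁ : Type*} [CommRing R] [AddCommGroup M₁] [Module R M₁]
    (l : ℕ) (lam : R) (k w : Fin (l + 1) → M₁) (i : Fin l) :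
    phiMap l lam (k + w) i = phiMap l lam k i + phiMap l lam w i := by
  simp only [phiMap, Pi.add_apply, smul_add]
  abel

lemma phiMap_key {R M₁ : Type*} [CommRing R] [IsDomain R] [AddCommGroup M₁] [Module R M₁]
    (V₁ : Submodule R M₁)
    (hrad : ∀ r : R, r ≠ 0 → ∀ v : M₁, r • v ∈ V₁ → v ∈ V₁)
    (l : ℕ) (hl : 0 < l) {lam₁ lam₂ : R} (hne : lam₁ ≠ lam₂)
    (v : Fin (l + 1) → M₁)
    (h1 : ∀ i, phiMap l lam₁ v i ∈ V₁) (h2 : ∀ i, phiMap l lam₂ v i ∈ V₁) :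
    ∀ i, v i ∈ V₁ := by
  set i₀ : Fin l := ⟨l - 1, by omega⟩ with hi₀
  have e1 := h1 i₀
  have e2 := h2 i₀
  rw [phiMap, if_pos rfl] at e1 e2
  have h0 : v 0 ∈ V₁ := by
    have hs : (lam₂ - lam₁) • v 0 ∈ V₁ := by
      have := V₁.sub_mem e1 e2
      have heq : (v i₀.succ - lam₁ • v 0) - (v i₀.succ - lam₂ • v 0)
          = (lam₂ - lam₁) • v 0 := by rw [sub_smul]; abel
      rwa [heq] at this
    exact hrad _ (sub_ne_zero.mpr hne.symm) _ hs
  intro j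
  refine Fin.cases h0 (fun i => ?_) j
  by_cases hc : (i : ℕ) = l - 1
  · have hi := h1 i
    rw [phiMap, if_pos hc] at hi
    have : v i.succ = (v i.succ - lam₁ • v 0) + lam₁ • v 0 := by abel
    rw [this]
    exact V₁.add_mem hi (V₁.smul_mem _ h0)
  · have hi := h1 i
    rw [phiMap, if_neg hc, one_smul] at hi
    have : v i.succ = (v i.succ - v 0) + v 0 := by abel
    rw [this]
    exact V₁.add_mem hi h0

/-- Lemma 5.4: with `V₁` a radical `G`-invariant submodule of `M₁` over an integral domain
`R`: for distinct `λ₁ ≠ λ₂`, `(ker φ_{λ₁} + V₁^{l+1}) ∩ (ker φ_{λ₂} + V₁^{l+1}) = V₁^{l+1}`;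
consequently for any `Λ ⊆ R` of `m+1` elements and any `𝔐 ⊆ M₁^{l+1}` with `|𝔐| ≤ m` and
`𝔐 ∩ V₁^{l+1} = ∅`, there is `λ ∈ Λ` with `φ_λ(𝔐) ∩ V₁^l = ∅`. -/
theorem stmt19 (R : Type*) [CommRing R] [IsDomain R] (G : Type*) [Group G]
    (M₁ : Type*) [AddCommGroup M₁] [Module R M₁] (ρ : Representation R G M₁)
    (V₁ : Submodule R M₁)
    (hrad : ∀ r : R, r ≠ 0 → ∀ v : M₁, r • v ∈ V₁ → v ∈ V₁)
    (hinv : ∀ g : G, V₁.map (ρ g) ≤ V₁)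
    (m l : ℕ) (hm : 0 < m) (hl : 0 < l) :
    (∀ lam₁ lam₂ : R, lam₁ ≠ lam₂ →
      ({v : Fin (l + 1) → M₁ | ∃ k w : Fin (l + 1) → M₁,
          phiMap l lam₁ k = 0 ∧ (∀ i, w i ∈ V₁) ∧ v = k + w} ∩
        {v : Fin (l + 1) → M₁ | ∃ k w : Fin (l + 1) → M₁,
          phiMap l lam₂ k = 0 ∧ (∀ i, w i ∈ V₁) ∧ v = k + w})
        = {v : Fin (l + 1) → M₁ | ∀ i, v i ∈ V₁}) ∧
    (∀ Λ : Finset R, Λ.card = m + 1 →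
      ∀ 𝔐 : Finset (Fin (l + 1) → M₁), 𝔐.card ≤ m →
        (∀ v ∈ 𝔐, ¬ ∀ i, v i ∈ V₁) →
        ∃ lam ∈ Λ, ∀ v ∈ 𝔐, ¬ ∀ i, phiMap l lam v i ∈ V₁) := by
  classical
  have memker : ∀ (lam : R) (v : Fin (l + 1) → M₁),
      (∃ k w : Fin (l + 1) → M₁,
        phiMap l lam k = 0 ∧ (∀ i, w i ∈ V₁) ∧ v = k + w) →
      ∀ i, phiMap l lam v i ∈ V₁ := by
    rintro lam v ⟨k, w, hk, hw, rfl⟩ i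
    rw [phiMap_add, congrFun hk i, Pi.zero_apply, zero_add, phiMap]
    exact V₁.sub_mem (hw _) (V₁.smul_mem _ (hw _))
  constructor
  · intro lam₁ lam₂ hne
    ext v
    simp only [Set.mem_inter_iff, Set.mem_setOf_eq]
    constructor
    · rintro ⟨h1, h2⟩
      exact phiMap_key V₁ hrad l hl hne v (memker _ _ h1) (memker _ _ h2)
    · intro hv
      have hz : ∀ lam : R, (∃ k w : Fin (l + 1) → M₁,
          phiMap l lam k = 0 ∧ (∀ i, w i ∈ V₁) ∧ v = k + w) := by
        intro lam
        refine ⟨0, v, ?_, hv, by simp⟩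
        funext i
        simp [phiMap]
      exact ⟨hz _, hz _⟩
  · intro Λ hΛ 𝔐 h𝔐 hV
    set S : Finset R := Λ.filter (fun lam => ∃ v ∈ 𝔐, ∀ i, phiMap l lam v i ∈ V₁) with hS
    set g : R → (Fin (l + 1) → M₁) := fun lam =>
      if h : ∃ v ∈ 𝔐, ∀ i, phiMap l lam v i ∈ V₁ then h.choose else 0 with hg
    have hfmem : ∀ lam ∈ S, g lam ∈ 𝔐 ∧ ∀ i, phiMap l lam (g lam) i ∈ V₁ := by
      intro lam hlam
      have h := (Finset.mem_filter.mp hlam).2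
      rw [hg]
      simp only [dif_pos h]
      obtain ⟨hv, hb⟩ := h.choose_spec
      exact ⟨hv, hb⟩
    have hcard : S.card ≤ 𝔐.card := by
      refine Finset.card_le_card_of_injOn g ?_ ?_
      · intro lam hlam
        exact (hfmem lam hlam).1
      · intro a ha b hb hab
        simp only [Finset.mem_coe] at ha hb
        by_contra hne
        have h1 := (hfmem a ha).2
        have h2 := (hfmem b hb).2
        rw [hab] at h1
        exact hV _ (hfmem b hb).1 (phiMap_key V₁ hrad l hl hne _ h1 h2)
    have hlt : S.card < Λ.card := by omega
    obtain ⟨lam, hlamΛ, hlamS⟩ : ∃ lam ∈ Λ, lam ∉ S := by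
      by_contra hcon
      push_neg at hcon
      have : Λ ⊆ S := fun x hx => hcon x hx
      exact absurd (Finset.card_le_card this) (by omega)
    refine ⟨lam, hlamΛ, ?_⟩
    intro v hv hbad
    exact hlamS (Finset.mem_filter.mpr ⟨hlamΛ, v, hv, hbad⟩)
end
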